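/- Let J = diag(J1,J2,J3) with J1,J2,J3 > 0 and E(w) := J^{-1}(Jw × w). Let (R, ω) solve the free-rotation dynamics R'(t) = R(t)·[ω(t)]ₓ, ω'(t) = E(ω(t)) with R(t₀) ∈ SO(3), and suppose ω(t₀) ≠ 0 is an eigenvector of J. Let å ∈ ℝ³ be a unit vector parallel to R(t₀)·J·ω(t₀). Then the measurement a(t) := R(t)ᵀ·å is constant in t, and the persistent excitation condition fails for all parameters: for every T > 0 and every μ ∈ (0,1) there exist t and a unit vector x (namely x = a(t₀)) with (1/T)·∫_t^{t+T} (a(s)ᵀx)² ds = 1 > 1 − μ. -/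

import Mathlib

open Matrix MeasureTheory intervalIntegral

noncomputable section

attribute [local instance] Matrix.normedAddCommGroup Matrix.normedSpace

/-- Cross product on ℝ³. -/
def cross3 (x y : Fin 3 → ℝ) : Fin 3 → ℝ :=
  ![x 1 * y 2 - x 2 * y 1, x 2 * y 0 - x 0 * y 2, x 0 * y 1 - x 1 * y 0]

/-- Euclidean norm on ℝ³. -/
def enorm3 (x : Fin 3 → ℝ) : ℝ := Real.sqrt (∑ i, (x i) ^ 2)

/-- Skew-symmetric cross-product matrix `[x]ₓ`. -/
def skew3 (x : Fin 3 → ℝ) : Matrix (Fin 3) (Fin 3) ℝ :=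
  !![0, -x 2, x 1; x 2, 0, -x 0; -x 1, x 0, 0]

/-!
Since `Jω(t₀) ∥ ω(t₀)`, the cross product in Euler's equation vanishes at `ω(t₀)`, so `ω(t₀)` is an
equilibrium of `ω' = E(ω)`; `E` is polynomial, hence locally Lipschitz, and uniqueness of solutions
forces `ω ≡ ω(t₀)`. Then `a' = a [ω(t₀)]ₓ = -ω(t₀) × a` is a linear ODE, and `a(t₀) = R(t₀)ᵀå`
is again parallel to `ω(t₀)`, hence an equilibrium: `a` is constant, of unit length because
`R(t₀)` is orthogonal, so the PE integrand `(a(s) ⬝ a(t₀))²` is identically `1`.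
-/

section ODE

variable {E : Type*} [NormedAddCommGroup E] [NormedSpace ℝ E] {v : E → E}

theorem ODE_solution_unique_of_locallyLipschitz (hv : LocallyLipschitz v) {f g : ℝ → E}
    (hf : ∀ t, HasDerivAt f (v (f t)) t) (hg : ∀ t, HasDerivAt g (v (g t)) t) {t₀ : ℝ}
    (heq : f t₀ = g t₀) : f = g := by
  have hfc : Continuous f := continuous_iff_continuousAt.2 fun t => (hf t).continuousAt
  have hgc : Continuous g := continuous_iff_continuousAt.2 fun t => (hg t).continuousAt
  suffices {t | f t = g t} = Set.univ from funext (Set.eq_univ_iff_forall.1 this)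
  refine IsClopen.eq_univ ⟨isClosed_eq hfc hgc, isOpen_iff_mem_nhds.2 fun t₁ ht₁ => ?_⟩ ⟨t₀, heq⟩
  obtain ⟨K, U, hU, hlip⟩ := hv (f t₁)
  have hfU : ∀ᶠ t in nhds t₁, f t ∈ U := hfc.continuousAt.eventually_mem hU
  have hgU : ∀ᶠ t in nhds t₁, g t ∈ U :=
    hgc.continuousAt.eventually_mem (by rwa [← show f t₁ = g t₁ from ht₁])
  exact ODE_solution_unique_of_eventually (v := fun _ => v) (s := fun _ => U)
    (.of_forall fun _ => hlip) (hfU.mono fun t ht => ⟨hf t, ht⟩)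
    (hgU.mono fun t ht => ⟨hg t, ht⟩) ht₁

theorem ODE_solution_eq_const_of_locallyLipschitz (hv : LocallyLipschitz v) {f : ℝ → E}
    (hf : ∀ t, HasDerivAt f (v (f t)) t) {t₀ : ℝ} (hzero : v (f t₀) = 0) (t : ℝ) :
    f t = f t₀ :=
  congrFun (ODE_solution_unique_of_locallyLipschitz (g := fun _ => f t₀) hv hf
    (fun _ => by simpa [hzero] using hasDerivAt_const _ (f t₀)) rfl) t

end ODE

theorem HasDerivAt.const_vecMul {m n : Type*} [Fintype m] [Fintype n] {R : ℝ → Matrix m n ℝ}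
    {R' : Matrix m n ℝ} {t : ℝ} (hR : HasDerivAt R R' t) (v : m → ℝ) :
    HasDerivAt (fun t => v ᵥ* R t) (v ᵥ* R') t := by
  exact (LinearMap.toContinuousLinearMap (vecMulBilin ℝ ℝ v)).hasFDerivAt.comp_hasDerivAt t hR

theorem transpose_mulVec_dotProduct_self {α n : Type*} [CommSemiring α] [Fintype n]
    [DecidableEq n] {M : Matrix n n α} (hM : M * Mᵀ = 1) (v : n → α) :
    (Mᵀ *ᵥ v) ⬝ᵥ (Mᵀ *ᵥ v) = v ⬝ᵥ v := by
  rw [dotProduct_mulVec, vecMul_transpose, mulVec_mulVec, hM, one_mulVec]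

theorem enorm3_eq_sqrt_dotProduct (x : Fin 3 → ℝ) : enorm3 x = √(x ⬝ᵥ x) := by
  simp [enorm3, dotProduct, sq]

theorem cross3_smul_left_self (c : ℝ) (x : Fin 3 → ℝ) : cross3 (c • x) x = 0 := by
  ext i; fin_cases i <;> simp [cross3] <;> ring

theorem vecMul_skew3_self (x : Fin 3 → ℝ) : x ᵥ* skew3 x = 0 := by
  ext i; fin_cases i <;> simp [skew3, vecMul, dotProduct, Fin.sum_univ_three] <;> ring

theorem contDiff_mulVec_cross3_mulVec (A B : Matrix (Fin 3) (Fin 3) ℝ) {n : WithTop ℕ∞} :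
    ContDiff ℝ n (fun w => A *ᵥ cross3 (B *ᵥ w) w) := by
  refine contDiff_pi.2 fun i => ?_
  simp only [cross3, mulVec, dotProduct, Fin.sum_univ_three, Fin.isValue, cons_val_zero,
    cons_val_one, cons_val_two, tail_cons, head_cons]
  fun_prop

theorem type1_aligned_not_PE_general
    (J : Matrix (Fin 3) (Fin 3) ℝ)
    (E : (Fin 3 → ℝ) → Fin 3 → ℝ)
    (hE : ∀ w, E w = J⁻¹.mulVec (cross3 (J.mulVec w) w))
    (t₀ : ℝ)
    (R : ℝ → Matrix (Fin 3) (Fin 3) ℝ) (ω : ℝ → Fin 3 → ℝ)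
    (hRode : ∀ t, HasDerivAt R (R t * skew3 (ω t)) t)
    (hωode : ∀ t, HasDerivAt ω (E (ω t)) t)
    (hR₀orth : (R t₀)ᵀ * R t₀ = 1)
    (heig : ∃ lam : ℝ, J.mulVec (ω t₀) = lam • ω t₀)
    (aring : Fin 3 → ℝ) (haring : enorm3 aring = 1)
    (hpar : ∃ s : ℝ, aring = s • (R t₀).mulVec (J.mulVec (ω t₀)))
    (a : ℝ → Fin 3 → ℝ) (ha : ∀ t, a t = (R t)ᵀ.mulVec aring) :
    (∀ t, a t = a t₀) ∧
      ∀ T μ : ℝ, 0 < T → 0 < μ → μ < 1 →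
        ∃ (t : ℝ) (x : Fin 3 → ℝ), x = a t₀ ∧ enorm3 x = 1 ∧
          (1 / T) * (∫ s in t..(t + T), (a s ⬝ᵥ x) ^ 2) = 1 ∧ (1 : ℝ) > 1 - μ := by
  obtain ⟨lam, hlam⟩ := heig
  obtain ⟨s, hs⟩ := hpar
  have hω : ∀ t, ω t = ω t₀ := by
    refine ODE_solution_eq_const_of_locallyLipschitz ?_ hωode ?_
    · simpa only [← funext hE] using
        (contDiff_mulVec_cross3_mulVec J⁻¹ J (n := 1)).locallyLipschitz
    · rw [hE, hlam, cross3_smul_left_self, mulVec_zero]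
  have ha' : ∀ t, HasDerivAt a (a t ᵥ* skew3 (ω t₀)) t := fun t => by
    rw [show a = fun t => aring ᵥ* R t from funext fun t => (ha t).trans (mulVec_transpose _ _),
      vecMul_vecMul, ← hω t]
    exact (hRode t).const_vecMul aring
  have ha₀ : a t₀ = (s * lam) • ω t₀ := by
    rw [ha, hs, mulVec_smul, mulVec_mulVec, hR₀orth, one_mulVec, hlam, smul_smul]
  have haconst : ∀ t, a t = a t₀ := by
    refine ODE_solution_eq_const_of_locallyLipschitz (v := fun y => y ᵥ* skew3 (ω t₀)) ?_ ha' ?_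
    · exact (LinearMap.toContinuousLinearMap (skew3 (ω t₀)).vecMulLinear).lipschitz
        |>.locallyLipschitz
    · rw [ha₀, smul_vecMul, vecMul_skew3_self, smul_zero]
  have hunit : a t₀ ⬝ᵥ a t₀ = 1 := by
    rw [ha, transpose_mulVec_dotProduct_self (mul_eq_one_comm.mp hR₀orth),
      ← Real.sqrt_eq_one, ← enorm3_eq_sqrt_dotProduct, haring]
  refine ⟨haconst, fun T μ hT _ hμ1 => ⟨t₀, a t₀, rfl, ?_, ?_, by linarith⟩⟩
  · rw [enorm3_eq_sqrt_dotProduct, hunit, Real.sqrt_one]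
  · simp [haconst, hunit, hT.ne']

/-- in free rotation, if `ω(t₀)` is an eigenvector of `J` and the
reference vector `å` is parallel to `R(t₀)Jω(t₀)`, then the measurement
`a(t) = R(t)ᵀå` is constant, and persistent excitation fails for all parameters. -/
theorem type1_aligned_not_PE
    (J1 J2 J3 : ℝ) (hJ1 : 0 < J1) (hJ2 : 0 < J2) (hJ3 : 0 < J3)
    (J : Matrix (Fin 3) (Fin 3) ℝ) (hJ : J = Matrix.diagonal ![J1, J2, J3])
    (E : (Fin 3 → ℝ) → Fin 3 → ℝ)
    (hE : ∀ w, E w = J⁻¹.mulVec (cross3 (J.mulVec w) w))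
    (t₀ : ℝ)
    (R : ℝ → Matrix (Fin 3) (Fin 3) ℝ) (ω : ℝ → Fin 3 → ℝ)
    (hRode : ∀ t, HasDerivAt R (R t * skew3 (ω t)) t)
    (hωode : ∀ t, HasDerivAt ω (E (ω t)) t)
    (hR₀orth : (R t₀)ᵀ * R t₀ = 1) (hR₀det : (R t₀).det = 1)
    (hω₀ : ω t₀ ≠ 0)
    (heig : ∃ lam : ℝ, J.mulVec (ω t₀) = lam • ω t₀)
    (aring : Fin 3 → ℝ) (haring : enorm3 aring = 1)
    (hpar : ∃ s : ℝ, aring = s • (R t₀).mulVec (J.mulVec (ω t₀)))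
    (a : ℝ → Fin 3 → ℝ) (ha : ∀ t, a t = (R t)ᵀ.mulVec aring) :
    (∀ t, a t = a t₀) ∧
      ∀ T μ : ℝ, 0 < T → 0 < μ → μ < 1 →
        ∃ (t : ℝ) (x : Fin 3 → ℝ), x = a t₀ ∧ enorm3 x = 1 ∧
          (1 / T) * (∫ s in t..(t + T), (a s ⬝ᵥ x) ^ 2) = 1 ∧ (1 : ℝ) > 1 - μ :=
  type1_aligned_not_PE_general J E hE t₀ R ω hRode hωode hR₀orth heig aring haring hpar a ha

end
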